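/- arXiv:2207.00886 — 2 statements merged into one kernel-verified Lean document; each statement's English description precedes it below -/
import Mathlib

section
/- For every positive integer n, the rows of B^{[n]} labeled by even-weight binary vectors of length n are eigenvectors of K^{[n]} with eigenvalue 1, and the rows labeled by odd-weight vectors are eigenvectors with eigenvalue −1. -/
open Matrix Finset

noncomputable def K : Matrix (Fin 2) (Fin 2) ℝ := (1 / Real.sqrt 2) • !![1, 1; 1, -1]

noncomputable def B : Matrix (Fin 2) (Fin 2) ℝ :=
  !![1, Real.sqrt 2 - 1; 1, -Real.sqrt 2 - 1]

/-- n-th Kronecker power of a 2×2 matrix, indexed by binary vectors of length n. -/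
noncomputable def kronPow (M : Matrix (Fin 2) (Fin 2) ℝ) (n : ℕ) :
    Matrix (Fin n → Fin 2) (Fin n → Fin 2) ℝ :=
  fun u v => ∏ i, M (u i) (v i)

def wt {n : ℕ} (v : Fin n → Fin 2) : ℕ := (univ.filter fun i => v i = 1).card

/-!
`B K = diag(1, -1) B`: the two rows of `B` are eigenvectors of `K` for the eigenvalues `1` and `-1`.
Since `M ↦ M^{[n]}` is multiplicative, `B^{[n]} K^{[n]} = diag(1, -1)^{[n]} B^{[n]}`, and the
diagonal entry of `diag(1, -1)^{[n]}` at `v` is `(-1)^{wt v}`. The rows of `B^{[n]}` are nonzero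
because the first column of `B` is all ones.
-/

theorem kronPow_mul (M N : Matrix (Fin 2) (Fin 2) ℝ) (n : ℕ) :
    kronPow M n * kronPow N n = kronPow (M * N) n := by
  ext u w
  simp only [kronPow, mul_apply, ← prod_mul_distrib]
  exact (Fintype.prod_sum fun i j => M (u i) j * N j (w i)).symm

theorem kronPow_diagonal (d : Fin 2 → ℝ) (n : ℕ) :
    kronPow (diagonal d) n = diagonal fun v => ∏ i, d (v i) := by
  ext u w
  by_cases huw : u = w
  · subst huw
    simp [kronPow]
  · obtain ⟨i, hi⟩ := Function.ne_iff.mp huw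
    simp only [kronPow, diagonal_apply_ne _ huw]
    exact prod_eq_zero (mem_univ i) (diagonal_apply_ne _ hi)

theorem prod_signs_eq_neg_one_pow_wt {n : ℕ} (v : Fin n → Fin 2) :
    ∏ i, ![(1 : ℝ), -1] (v i) = (-1) ^ wt v := by
  have hsign : ∀ i, ![(1 : ℝ), -1] (v i) = if v i = 1 then -1 else 1 := fun i => by
    rcases Fin.exists_fin_two.mp ⟨v i, rfl⟩ with h | h <;> simp [h]
  simp only [hsign, prod_ite, prod_const, one_pow, mul_one, wt]

theorem B_mul_K : B * K = diagonal ![1, -1] * B := by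
  have hsqrt : Real.sqrt 2 * Real.sqrt 2 = 2 := Real.mul_self_sqrt (by norm_num)
  ext a b
  fin_cases a <;> fin_cases b <;>
    simp [B, K, mul_apply, Fin.sum_univ_two, field] <;> linear_combination -hsqrt

theorem kronPow_B_row_vecMul_kronPow_K {n : ℕ} (v : Fin n → Fin 2) :
    kronPow B n v ᵥ* kronPow K n = (-1 : ℝ) ^ wt v • kronPow B n v := by
  rw [← mul_apply_eq_vecMul, kronPow_mul, B_mul_K, ← kronPow_mul, kronPow_diagonal]
  ext w
  simp [diagonal_mul, prod_signs_eq_neg_one_pow_wt]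

theorem kronPow_B_row_ne_zero {n : ℕ} (v : Fin n → Fin 2) : kronPow B n v ≠ 0 := by
  have hB : ∀ a, B a 0 = 1 := fun a => by fin_cases a <;> simp [B]
  intro h
  simpa [kronPow, hB] using congrFun h 0

theorem stmt_4_general (n : ℕ) (v : Fin n → Fin 2) :
    (Even (wt v) →
      Module.End.HasEigenvector (kronPow K n).vecMulLinear (1 : ℝ) (kronPow B n v)) ∧
    (¬ Even (wt v) →
      Module.End.HasEigenvector (kronPow K n).vecMulLinear (-1 : ℝ) (kronPow B n v)) := by
  have hEigen : ∀ μ : ℝ, (-1) ^ wt v = μ →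
      Module.End.HasEigenvector (kronPow K n).vecMulLinear μ (kronPow B n v) := by
    rintro μ rfl
    refine ⟨Module.End.mem_eigenspace_iff.mpr ?_, kronPow_B_row_ne_zero v⟩
    rw [vecMulLinear_apply, kronPow_B_row_vecMul_kronPow_K]
  exact ⟨fun h => hEigen 1 h.neg_one_pow,
    fun h => hEigen (-1) (Nat.not_even_iff_odd.mp h).neg_one_pow⟩

/-- The rows of B^{[n]} labeled by even-weight binary vectors are eigenvectors of
K^{[n]} (acting on row vectors) with eigenvalue 1, and those labeled by odd-weight
vectors are eigenvectors with eigenvalue −1. -/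
theorem stmt_4 (n : ℕ) (hn : 0 < n) (v : Fin n → Fin 2) :
    (Even (wt v) →
      Module.End.HasEigenvector (kronPow K n).vecMulLinear (1 : ℝ) (kronPow B n v)) ∧
    (¬ Even (wt v) →
      Module.End.HasEigenvector (kronPow K n).vecMulLinear (-1 : ℝ) (kronPow B n v)) :=
  stmt_4_general n v
end

section
/- If W ∈ ℝ^{2ⁿ} satisfies W·K^{[n]} = W, then the vector W' = W[0] + ρ·W[1] ∈ ℝ^{2^{n−1}} satisfies W'·K^{[n−1]} = W', where ρ = √2 − 1, W[0] is the first half of W and W[1] is the second half. -/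
/-! By the block form of `K^{[1+m]}`, the `ε`-half of `W·K^{[1+m]}` is `∑_δ K δ ε · (W[δ]·K^{[m]})`.
So for any `x` with `K x = x`, the combination `∑_δ x δ · W[δ]` of the halves of a fixed vector `W`
of `K^{[1+m]}` is a fixed vector of `K^{[m]}`; and `x = (1, ρ)` works since
`(1 + ρ)/√2 = 1` and `(1 - ρ)/√2 = ρ`. -/

open Matrix Finset

noncomputable def rho : ℝ := Real.sqrt 2 - 1

theorem Fin.sum_univ_pi_one_add {α M : Type*} [Fintype α] [AddCommMonoid M] (m : ℕ)
    (f : (Fin (1 + m) → α) → M) :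
    ∑ w, f w = ∑ a, ∑ v, f (Fin.append (fun _ : Fin 1 => a) v) := by
  rw [← (Fin.appendEquiv 1 m).sum_comp, Fintype.sum_prod_type,
    ← (Equiv.funUnique (Fin 1) α).symm.sum_comp]
  rfl

theorem kronPow_append_append (M : Matrix (Fin 2) (Fin 2) ℝ) {m : ℕ} (δ ε : Fin 2)
    (u v : Fin m → Fin 2) :
    kronPow M (1 + m) (Fin.append (fun _ : Fin 1 => δ) u) (Fin.append (fun _ : Fin 1 => ε) v) =
      M δ ε * kronPow M m u v := by
  simp [kronPow, Fin.prod_univ_add]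

def contractHead {m : ℕ} (x : Fin 2 → ℝ) (W : (Fin (1 + m) → Fin 2) → ℝ) :
    (Fin m → Fin 2) → ℝ :=
  fun v => ∑ δ, x δ * W (Fin.append (fun _ : Fin 1 => δ) v)

theorem vecMul_kronPow_one_add_apply (M : Matrix (Fin 2) (Fin 2) ℝ) {m : ℕ}
    (W : (Fin (1 + m) → Fin 2) → ℝ) (ε : Fin 2) (v : Fin m → Fin 2) :
    vecMul W (kronPow M (1 + m)) (Fin.append (fun _ : Fin 1 => ε) v) =
      ∑ δ, M δ ε * vecMul (fun u => W (Fin.append (fun _ : Fin 1 => δ) u)) (kronPow M m) v := by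
  simp only [vecMul, dotProduct, Fin.sum_univ_pi_one_add, kronPow_append_append, mul_sum]
  exact sum_congr rfl fun _ _ => sum_congr rfl fun _ _ => by ring

theorem contractHead_vecMul_kronPow (M : Matrix (Fin 2) (Fin 2) ℝ) {m : ℕ} (x : Fin 2 → ℝ)
    (W : (Fin (1 + m) → Fin 2) → ℝ) :
    contractHead x (vecMul W (kronPow M (1 + m))) =
      vecMul (contractHead (M *ᵥ x) W) (kronPow M m) := by
  have sum_halves : ∀ y : Fin 2 → ℝ,
      contractHead y W = ∑ δ, y δ • fun u => W (Fin.append (fun _ : Fin 1 => δ) u) := by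
    intro y
    ext u
    simp [contractHead]
  funext v
  rw [sum_halves, sum_vecMul]
  simp only [contractHead, vecMul_kronPow_one_add_apply, smul_vecMul, Finset.sum_apply,
    Pi.smul_apply, smul_eq_mul, mulVec, dotProduct, mul_sum, sum_mul]
  rw [sum_comm]
  exact sum_congr rfl fun _ _ => sum_congr rfl fun _ _ => by ring

theorem vecMul_contractHead_kronPow_of_mulVec_eq {M : Matrix (Fin 2) (Fin 2) ℝ} {m : ℕ}
    {x : Fin 2 → ℝ} {W : (Fin (1 + m) → Fin 2) → ℝ} (hx : M *ᵥ x = x)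
    (hW : vecMul W (kronPow M (1 + m)) = W) :
    vecMul (contractHead x W) (kronPow M m) = contractHead x W := by
  nth_rewrite 1 [← hx]
  rw [← contractHead_vecMul_kronPow, hW]

theorem K_mulVec_one_rho : K *ᵥ ![1, rho] = ![1, rho] := by
  have hsq : Real.sqrt 2 ^ 2 = 2 := Real.sq_sqrt (by norm_num)
  have hne : Real.sqrt 2 ≠ 0 := by positivity
  ext i
  fin_cases i <;>
    simp only [K, rho, mulVec, dotProduct, Fin.sum_univ_two, Matrix.smul_apply, of_apply,
      cons_val', cons_val_fin_one, cons_val_zero, cons_val_one, Fin.zero_eta, Fin.mk_one,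
      smul_eq_mul, mul_one, mul_neg] <;>
    field_simp <;> linarith

/-- If W ∈ ℝ^{2ⁿ} (n = 1+m) satisfies W·K^{[n]} = W, then W' = W[0] + ρ·W[1]
satisfies W'·K^{[n−1]} = W', where W[δ] is the half of W whose labels start with δ. -/
theorem stmt_13 (m : ℕ) (W : (Fin (1 + m) → Fin 2) → ℝ)
    (hW : vecMul W (kronPow K (1 + m)) = W) :
    vecMul
      (fun v : Fin m → Fin 2 =>
        W (Fin.append (fun _ : Fin 1 => (0 : Fin 2)) v) +
          rho * W (Fin.append (fun _ : Fin 1 => (1 : Fin 2)) v))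
      (kronPow K m) =
    fun v : Fin m → Fin 2 =>
      W (Fin.append (fun _ : Fin 1 => (0 : Fin 2)) v) +
        rho * W (Fin.append (fun _ : Fin 1 => (1 : Fin 2)) v) := by
  have h_contract : (fun v : Fin m → Fin 2 =>
      W (Fin.append (fun _ : Fin 1 => (0 : Fin 2)) v) +
        rho * W (Fin.append (fun _ : Fin 1 => (1 : Fin 2)) v)) = contractHead ![1, rho] W := by
    funext v
    simp [contractHead, Fin.sum_univ_two]
  rw [h_contract]
  exact vecMul_contractHead_kronPow_of_mulVec_eq K_mulVec_one_rho hW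
end
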